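/- arXiv:1305.7004 — 3 statements merged into one kernel-verified Lean document; each statement's English description precedes it below -/
import Mathlib

section
/- Let R be a commutative Noetherian ring, n a nonnegative integer, and M an R-module in dimension < n. Then the set of associated primes p of M with dim R/p ≥ n is finite. -/
/-!
Every associated prime `p` of `M` lies in `Ass N ∪ Ass (M/N)`. If `p ∈ Ass (M/N)`, every prime
containing `p` lies in `Supp (M/N)`, so `dim R/p ≤ dim Supp (M/N) < n`. Hence the associated
primes with `dim R/p ≥ n` are associated primes of the finitely generated module `N`, and there
are only finitely many of those.
-/

open CategoryTheory

universe u

/-- An `R`-module `M` is *in dimension `< n`* if there is a finitely generated submodule `N`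
of `M` such that the Krull dimension of `Supp (M/N)` is `< n`. -/
def InDimLT (R : Type u) [CommRing R] (M : Type u) [AddCommGroup M] [Module R M]
    (n : ℕ) : Prop :=
  ∃ N : Submodule R M, N.FG ∧
    Order.krullDim (Module.support R (M ⧸ N)) < (n : WithBot ℕ∞)

/-- `f_a(M)`: the least `i` such that `H^i_a(M)` is not finitely generated (`⊤` if none). -/
noncomputable def fDim (R : Type u) [CommRing R] (a : Ideal R)
    (M : Type u) [AddCommGroup M] [Module R M] : ℕ∞ :=
  sInf {i : ℕ∞ | ∃ j : ℕ, i = j ∧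
    ¬ Module.Finite R ((localCohomology a j).obj (ModuleCat.of R M))}

/-- `f^n_a(M) = inf { f_{aR_p}(M_p) : p ∈ Supp(M/aM), dim R/p ≥ n }`. -/
noncomputable def fDimN (R : Type u) [CommRing R] (a : Ideal R)
    (M : Type u) [AddCommGroup M] [Module R M] (n : ℕ) : ℕ∞ :=
  sInf {i : ℕ∞ | ∃ p : PrimeSpectrum R,
    p ∈ Module.support R (M ⧸ (a • ⊤ : Submodule R M)) ∧
    (n : WithBot ℕ∞) ≤ ringKrullDim (R ⧸ p.asIdeal) ∧
    i = fDim (Localization.AtPrime p.asIdeal)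
          (a.map (algebraMap R (Localization.AtPrime p.asIdeal)))
          (LocalizedModule p.asIdeal.primeCompl M)}

/-- `h^n_a(M)`: the least `i` such that `H^i_a(M)` is not in dimension `< n` (`⊤` if none). -/
noncomputable def hDim (R : Type u) [CommRing R] (a : Ideal R)
    (M : Type u) [AddCommGroup M] [Module R M] (n : ℕ) : ℕ∞ :=
  sInf {i : ℕ∞ | ∃ j : ℕ, i = j ∧
    ¬ InDimLT R ((localCohomology a j).obj (ModuleCat.of R M)) n}

section

variable {R M : Type*} [CommRing R] [AddCommGroup M] [Module R M] {p : Ideal R}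

lemma IsAssociatedPrime.zeroLocus_subset_support (hp : IsAssociatedPrime p M) :
    PrimeSpectrum.zeroLocus (p : Set R) ⊆ Module.support R M := by
  obtain ⟨-, x, rfl⟩ := hp
  intro q hq
  rw [Module.mem_support_iff_exists_annihilator]
  refine ⟨x, fun c hc ↦ (PrimeSpectrum.mem_zeroLocus q _).mp hq (Ideal.le_radical ?_)⟩
  rw [Submodule.mem_colon_singleton, Submodule.mem_bot]
  exact (Submodule.mem_annihilator_span_singleton x c).mp hc

lemma IsAssociatedPrime.ringKrullDim_quotient_le (hp : IsAssociatedPrime p M) :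
    ringKrullDim (R ⧸ p) ≤ Order.krullDim (Module.support R M) := by
  rw [ringKrullDim_quotient]
  exact Order.krullDim_le_of_strictMono (Set.inclusion hp.zeroLocus_subset_support)
    fun _ _ h ↦ h

lemma mem_associatedPrimes_of_krullDim_support_quotient_lt {N : Submodule R M}
    (hp : p ∈ associatedPrimes R M)
    (hdim : Order.krullDim (Module.support R (M ⧸ N)) < ringKrullDim (R ⧸ p)) :
    p ∈ associatedPrimes R N :=
  (associatedPrimes.subset_union_of_exact N.injective_subtype (LinearMap.exact_subtype_mkQ N)
    hp).resolve_right fun hq ↦ (IsAssociatedPrime.ringKrullDim_quotient_le hq).not_gt hdim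

end

theorem assPrimes_finite_of_inDimLT (R M : Type u) [CommRing R] [IsNoetherianRing R]
    [AddCommGroup M] [Module R M] (n : ℕ) (h : InDimLT R M n) :
    {p ∈ associatedPrimes R M | (n : WithBot ℕ∞) ≤ ringKrullDim (R ⧸ p)}.Finite := by
  obtain ⟨N, hN, hdim⟩ := h
  have : Module.Finite R N := Module.Finite.iff_fg.mpr hN
  refine (associatedPrimes.finite R N).subset fun p ⟨hp, hn⟩ ↦ ?_
  exact mem_associatedPrimes_of_krullDim_support_quotient_lt hp (hdim.trans_le hn)
end

section
/- (Countable prime avoidance) Let R be a Noetherian ring which is complete local (or more generally, let R be a Noetherian complete local ring). If p is a prime ideal and {q_k}_{k=1}^∞ is a countable family of prime ideals with p ⊆ ⋃_{k=1}^∞ q_k, then p ⊆ q_k for some k. -/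
open CategoryTheory

universe u

/-!
For the `𝔪`-adic topology `R` is complete and, by Krull's intersection theorem applied to `R ⧸ J`,
every ideal `J` is closed. So the complete space `p`, whose uniformity is countably generated, is
covered by the closed sets `p ∩ q k`, and by Baire one of them contains a neighbourhood
`x + p ∩ 𝔪 ^ n` of one of its points. Then `p * 𝔪 ^ n ≤ p ⊓ 𝔪 ^ n ≤ q k`, so `p ≤ q k` or
`𝔪 ≤ q k`, and `p ≤ 𝔪` either way.
-/

open Topology

namespace Ideal

variable {R : Type*} [CommRing R]

theorem IsPrime.le_or_le_of_inf_pow_le {p q I : Ideal R} (hq : q.IsPrime) {n : ℕ}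
    (h : p ⊓ I ^ n ≤ q) : p ≤ q ∨ I ≤ q :=
  ((hq.mul_le).mp (mul_le_inf.trans h)).imp_right IsPrime.le_of_pow_le

theorem isClosed_of_isHausdorff_quotient [TopologicalSpace R] {I : Ideal R} (hI : IsAdic I)
    (J : Ideal R) [IsHausdorff I (R ⧸ J)] : IsClosed (J : Set R) := by
  refine isOpen_compl_iff.mp (isOpen_iff_mem_nhds.mpr fun a ha => ?_)
  obtain ⟨n, hn⟩ : ∃ n, ¬ Quotient.mk J a ≡ 0 [SMOD (I ^ n • ⊤ : Submodule R (R ⧸ J))] := by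
    by_contra! h
    exact ha (Quotient.eq_zero_iff_mem.mp (IsHausdorff.haus ‹_› _ h))
  refine (hI.hasBasis_nhds a).mem_iff.mpr ⟨n, trivial, ?_⟩
  rintro _ ⟨y, hy, rfl⟩ hay
  apply hn
  have : Quotient.mk J a = -(y • 1 : R ⧸ J) := by
    rw [eq_neg_iff_add_eq_zero, Algebra.smul_def, mul_one, Quotient.algebraMap_eq, ← map_add]
    exact Quotient.eq_zero_iff_mem.mpr hay
  rw [SModEq.zero, this]
  exact neg_mem (Submodule.smul_mem_smul hy Submodule.mem_top)

theorem exists_inf_pow_le_of_mem_interior [TopologicalSpace R] {I : Ideal R} (hI : IsAdic I)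
    {p q : Ideal R} {x : p} (hx : x ∈ interior {y : p | (y : R) ∈ q}) :
    ∃ n, p ⊓ I ^ n ≤ q := by
  have hxq : x ∈ {y : p | (y : R) ∈ q} := interior_subset hx
  obtain ⟨u, hu, hus⟩ := (mem_nhds_subtype _ x _).mp (mem_interior_iff_mem_nhds.mp hx)
  obtain ⟨n, -, hn⟩ := (hI.hasBasis_nhds x).mem_iff.mp hu
  refine ⟨n, fun y ⟨hyp, hyI⟩ => ?_⟩
  have : (⟨x + y, p.add_mem x.2 hyp⟩ : p) ∈ {y : p | (y : R) ∈ q} := hus (hn ⟨y, hyI, rfl⟩)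
  simpa using q.sub_mem this hxq

theorem exists_inf_pow_le_of_subset_iUnion [UniformSpace R] [IsUniformAddGroup R]
    {I : Ideal R} (hI : IsAdic I) [IsPrecomplete I R] {p : Ideal R} (hp : IsClosed (p : Set R))
    {ι : Type*} [Countable ι] {q : ι → Ideal R} (hq : ∀ i, IsClosed (q i : Set R))
    (hsub : (p : Set R) ⊆ ⋃ i, q i) : ∃ i n, p ⊓ I ^ n ≤ q i := by
  have := hI.hasBasis_nhds_zero.isCountablyGenerated
  have : (uniformity R).IsCountablyGenerated := IsUniformAddGroup.uniformity_countably_generated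
  have : CompleteSpace R := hI.isPrecomplete_iff.mp ‹_›
  have : CompleteSpace p := hp.completeSpace_coe
  have : (uniformity p).IsCountablyGenerated := Filter.comap.isCountablyGenerated _ _
  obtain ⟨i, x, hx⟩ := nonempty_interior_of_iUnion_of_closed
    (f := fun i => {y : p | (y : R) ∈ q i}) (fun i => (hq i).preimage continuous_subtype_val)
    (Set.eq_univ_of_forall fun y => by simpa using hsub y.2)
  exact ⟨i, exists_inf_pow_le_of_mem_interior hI hx⟩

end Ideal

theorem countable_prime_avoidance (R : Type u) [CommRing R] [IsNoetherianRing R]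
    [IsLocalRing R] [IsAdicComplete (IsLocalRing.maximalIdeal R) R]
    (p : Ideal R) (hp : p.IsPrime) (q : ℕ → Ideal R) (hq : ∀ k, (q k).IsPrime)
    (hsub : (p : Set R) ⊆ ⋃ k, (q k : Set R)) :
    ∃ k, p ≤ q k := by
  let : WithIdeal R := ⟨IsLocalRing.maximalIdeal R⟩
  have hI : IsAdic (IsLocalRing.maximalIdeal R) := rfl
  have hclosed (J : Ideal R) : IsClosed (J : Set R) := Ideal.isClosed_of_isHausdorff_quotient hI J
  obtain ⟨k, n, hk⟩ :=
    Ideal.exists_inf_pow_le_of_subset_iUnion hI (hclosed p) (fun k => hclosed (q k)) hsub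
  exact ⟨k, ((hq k).le_or_le_of_inf_pow_le hk).elim id
    (IsLocalRing.le_maximalIdeal hp.ne_top).trans⟩
end

section
/- Let R be a commutative Noetherian ring, n a nonnegative integer, a an ideal, and X an R-module in dimension < n. Then for every m ∈ ℕ, the submodule (0 :_X a^m) is in dimension < n. -/
open CategoryTheory

universe u

/-! Being in dimension `< n` passes to every submodule `T ⊆ X`, not only to `(0 :_X a^m)`:
if `N` witnesses it for `X`, then `N ∩ T` is finitely generated because `R` is Noetherian, and
`T/(N ∩ T)` embeds into `X/N`, so its support is smaller. -/

section

variable {R M : Type*} [CommRing R] [AddCommGroup M] [Module R M]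

theorem Submodule.mapQ_comap_subtype_injective (T N : Submodule R M) :
    Function.Injective ((N.comap T.subtype).mapQ N T.subtype le_rfl) := by
  rw [← LinearMap.ker_eq_bot, Submodule.ker_mapQ, Submodule.mkQ_map_self]

theorem Module.support_quotient_comap_subtype_subset (T N : Submodule R M) :
    Module.support R (T ⧸ N.comap T.subtype) ⊆ Module.support R (M ⧸ N) :=
  Module.support_subset_of_injective _ (Submodule.mapQ_comap_subtype_injective T N)

theorem Order.krullDim_le_of_subset {α : Type*} [Preorder α] {s t : Set α} (hst : s ⊆ t) :
    Order.krullDim s ≤ Order.krullDim t :=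
  Order.krullDim_le_of_strictMono (Set.inclusion hst) fun _ _ => id

end

theorem InDimLT.submodule {R M : Type u} [CommRing R] [IsNoetherianRing R] [AddCommGroup M]
    [Module R M] {n : ℕ} (h : InDimLT R M n) (T : Submodule R M) : InDimLT R T n := by
  obtain ⟨N, hNfg, hNdim⟩ := h
  refine ⟨N.comap T.subtype, ?_, ?_⟩
  · refine Submodule.fg_of_fg_map_injective T.subtype T.injective_subtype ?_
    rw [Submodule.map_comap_subtype]
    exact hNfg.of_le inf_le_right
  · exact (Order.krullDim_le_of_subset
      (Module.support_quotient_comap_subtype_subset T N)).trans_lt hNdim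

theorem torsionBySet_inDimLT (R X : Type u) [CommRing R] [IsNoetherianRing R]
    [AddCommGroup X] [Module R X] (a : Ideal R) (n m : ℕ)
    (h : InDimLT R X n) :
    InDimLT R (Submodule.torsionBySet R X ((a ^ m : Ideal R) : Set R)) n :=
  h.submodule _
end
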